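/- Let D be a digraph obtained from a tournament by deleting the edges of three disjoint stars whose centers form a directed triangle. If every missing edge has positive in-degree and positive out-degree in the dependency digraph Δ of D, then D has a vertex with the second neighborhood property. -/

import Mathlib

variable {V : Type*}

/-- Out-neighborhood of `v`. -/
def Nplus (A : V → V → Prop) (v : V) : Set V := {u | A v u}

/-- In-neighborhood of `v`. -/
def Nminus (A : V → V → Prop) (v : V) : Set V := {u | A u v}

/-- Second out-neighborhood: vertices at directed distance exactly 2 from `v`. -/
def Npp (A : V → V → Prop) (v : V) : Set V :=
  {u | u ≠ v ∧ ¬ A v u ∧ ∃ w, A v w ∧ A w u}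

/-- The second neighborhood property. -/
def SNP (A : V → V → Prop) (v : V) : Prop := (Nplus A v).ncard ≤ (Npp A v).ncard

/-- A digraph (given by its arc relation) has no digons: no 2-cycles (this also rules out loops when stated for `u = v`). -/
def NoDigons (A : V → V → Prop) : Prop := ∀ u v, ¬ (A u v ∧ A v u)

/-- A tournament: an orientation of a complete graph. -/
def IsTournament (A : V → V → Prop) : Prop :=
  (∀ v, ¬ A v v) ∧ ∀ u v : V, u ≠ v → (A u v ↔ ¬ A v u)

/-- `u v` is a missing edge: distinct and non-adjacent. -/
def MissingEdge (A : V → V → Prop) (u v : V) : Prop := u ≠ v ∧ ¬ A u v ∧ ¬ A v u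

/-- `x₁y₁` loses to `x₂y₂` (with this labelling of endpoints). -/
def LosesAt (A : V → V → Prop) (x₁ y₁ x₂ y₂ : V) : Prop :=
  A x₁ x₂ ∧ ¬ A x₁ y₂ ∧ y₂ ∉ Npp A x₁ ∧ A y₁ y₂ ∧ ¬ A y₁ x₂ ∧ x₂ ∉ Npp A y₁

/-- The losing relation between (unordered) missing edges: the arcs of the dependency digraph. -/
def EdgeLoses (A : V → V → Prop) (e e' : Sym2 V) : Prop :=
  ∃ x₁ y₁ x₂ y₂, e = s(x₁, y₁) ∧ e' = s(x₂, y₂) ∧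
    MissingEdge A x₁ y₁ ∧ MissingEdge A x₂ y₂ ∧ LosesAt A x₁ y₁ x₂ y₂
/-!
Let `S` consist of the centres and leaves of the three stars. A vertex `u ∉ S` is adjacent to
all other vertices, and `δ(Δ) > 0` yields `z → u ⇒ a → u ⇒ y → u` for every leaf `a` of `x`,
together with the rotations of this chain; hence `u` either dominates all of `S` or is dominated
by all of `S`. Contracting `S` into `x` with weight `|S|` thus gives a weighted tournament, and
the last vertex `f` of a median order of it has the weighted SNP (Havet–Thomassé). If `f ≠ x`,
then `f` has the SNP in `D`. If `f = x`, then `|N⁺(c) \ S| ≤ |N⁺⁺(c) \ S|` for every centre `c`,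
while `N⁺(x) ∩ S = {y} ∪ L_z` and `N⁺⁺(x) ∩ S ⊇ {z} ∪ L_x` for the leaf sets `L_c`; since
`|L_z| ≤ |L_x|`, `|L_x| ≤ |L_y|` or `|L_y| ≤ |L_z|`, one of the centres has the SNP.
-/

namespace MedianOrder

variable (R : V → V → Prop) (w : V → ℕ)

open Classical in
noncomputable def weightOn (p : V → Prop) (l : List V) : ℕ :=
  (l.map fun v => if p v then w v else 0).sum

noncomputable def forwardWeight : List V → ℕ
  | [] => 0
  | a :: l => w a * weightOn w (R a) l + forwardWeight l

noncomputable def crossWeight (l₁ l₂ : List V) : ℕ :=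
  (l₁.map fun a => w a * weightOn w (R a) l₂).sum

variable {R w}

@[simp] theorem weightOn_nil (p : V → Prop) : weightOn w p [] = 0 := rfl

open Classical in
@[simp] theorem weightOn_cons (p : V → Prop) (a : V) (l : List V) :
    weightOn w p (a :: l) = (if p a then w a else 0) + weightOn w p l := by
  simp [weightOn]

@[simp] theorem weightOn_append (p : V → Prop) (l₁ l₂ : List V) :
    weightOn w p (l₁ ++ l₂) = weightOn w p l₁ + weightOn w p l₂ := by
  simp [weightOn]

theorem weightOn_mono {p q : V → Prop} {l : List V} (h : ∀ v ∈ l, p v → q v) :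
    weightOn w p l ≤ weightOn w q l :=
  List.sum_le_sum fun v hv => by split_ifs <;> simp_all

theorem weightOn_perm (p : V → Prop) {l l' : List V} (h : l.Perm l') :
    weightOn w p l = weightOn w p l' :=
  (h.map _).sum_eq

theorem crossWeight_perm_right (l : List V) {l₂ l₂' : List V} (h : l₂.Perm l₂') :
    crossWeight R w l l₂ = crossWeight R w l l₂' := by
  simp only [crossWeight, weightOn_perm _ h]

theorem crossWeight_cons_right (l : List V) (u : V) (r : List V) :
    crossWeight R w l (u :: r) = w u * weightOn w (fun v => R v u) l + crossWeight R w l r := by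
  induction l with
  | nil => simp [crossWeight]
  | cons a l ih =>
    simp only [crossWeight, List.map_cons, List.sum_cons, weightOn_cons] at ih ⊢
    rw [ih]
    split_ifs <;> ring

theorem forwardWeight_append (l₁ l₂ : List V) :
    forwardWeight R w (l₁ ++ l₂) =
      forwardWeight R w l₁ + forwardWeight R w l₂ + crossWeight R w l₁ l₂ := by
  induction l₁ with
  | nil => simp [forwardWeight, crossWeight]
  | cons a l ih =>
    simp only [List.cons_append, forwardWeight, ih, weightOn_append, crossWeight, List.map_cons,
      List.sum_cons]
    ring

variable (R w) in
def IsMedianOrder (L : List V) : Prop :=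
  ∀ L' : List V, L'.Perm L → forwardWeight R w L' ≤ forwardWeight R w L

variable (R w) in
theorem exists_isMedianOrder (l : List V) : ∃ L, L.Perm l ∧ IsMedianOrder R w L := by
  classical
  obtain ⟨L, hL, hmax⟩ := l.permutations.toFinset.exists_max_image (forwardWeight R w)
    ⟨l, by simp [List.mem_permutations]⟩
  simp only [List.mem_toFinset, List.mem_permutations] at hL hmax
  exact ⟨L, hL, fun L' hL' => hmax L' (hL'.trans hL)⟩

/-- Moving `u` to the front of `h` cannot increase the weight of forward arcs. -/
theorem IsMedianOrder.feedback {p h r : List V} {u : V}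
    (hL : IsMedianOrder R w (p ++ h ++ u :: r)) (hu : 0 < w u) :
    weightOn w (R u) h ≤ weightOn w (fun v => R v u) h := by
  have hperm : (p ++ u :: (h ++ r)).Perm (p ++ h ++ u :: r) := by
    simpa using (List.perm_middle (l₁ := h) (l₂ := r) (a := u)).symm.append_left p
  have key := hL _ hperm
  simp only [List.append_assoc, forwardWeight_append, forwardWeight, weightOn_append,
    crossWeight_cons_right, crossWeight_perm_right p List.perm_middle] at key
  have : w u * weightOn w (R u) h ≤ w u * weightOn w (fun v => R v u) h := by linarith
  exact Nat.le_of_mul_le_mul_left this hu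

/-- The vertices `K` not reached from the last vertex `f` within two steps dominate all
out-neighbours of `f`. They cut the order into intervals, and on each interval the feedback
property of the vertex of `K` (or of `f`) that follows it bounds the weight of out-neighbours
of `f` by the weight of second out-neighbours. -/
theorem IsMedianOrder.weightOn_le_weightOn_second {M : List V} {f : V}
    (hL : IsMedianOrder R w (M ++ [f])) (hw : ∀ v ∈ M ++ [f], 0 < w v)
    (asymm : ∀ u ∈ M ++ [f], ∀ v ∈ M ++ [f], R u v → ¬ R v u)
    (total : ∀ u ∈ M ++ [f], ∀ v ∈ M ++ [f], u ≠ v → ¬ R u v → R v u) :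
    weightOn w (R f) M ≤
      weightOn w (fun v => ¬ R f v ∧ ∃ t ∈ M ++ [f], R f t ∧ R t v) M := by
  set L := M ++ [f]
  set P : V → Prop := fun v => ¬ R f v ∧ ∃ t ∈ L, R f t ∧ R t v
  set K : V → Prop := fun v => ¬ R f v ∧ ¬ P v
  have hfL : f ∈ L := by simp [L]
  have dominates : ∀ a ∈ L, K a → ∀ v ∈ L, R f v → R a v := fun a ha hK v hv hfv =>
    total v hv a ha (fun h => hK.1 (h ▸ hfv)) fun hva => hK.2 ⟨hK.1, v, hv, hfv, hva⟩
  have suffix_bound : ∀ t p h, p ++ h ++ t = M → (∀ v ∈ h, ¬ K v) →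
      weightOn w (R f) (h ++ t) ≤ weightOn w P (h ++ t) := by
    intro t
    induction t with
    | nil =>
      intro p h hM hK
      have hh : ∀ v ∈ h, v ∈ L := fun v hv => by simp [L, ← hM, hv]
      calc weightOn w (R f) (h ++ []) ≤ weightOn w (fun v => R v f) h := by
            simpa using (show IsMedianOrder R w (p ++ h ++ [f]) by
              simpa [L, ← hM] using hL).feedback (hw f hfL)
        _ ≤ weightOn w P (h ++ []) := by
            simp only [List.append_nil]
            exact weightOn_mono fun v hv hvf => by
              by_contra hP
              exact hK v hv ⟨asymm v (hh v hv) f hfL hvf, hP⟩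
    | cons a t ih =>
      intro p h hM hK
      have haL : a ∈ L := by simp [L, ← hM]
      by_cases hKa : K a
      · have hh : ∀ v ∈ h, v ∈ L := fun v hv => by simp [L, ← hM, hv]
        have hfeed := (show IsMedianOrder R w (p ++ h ++ a :: (t ++ [f])) by
          simpa [L, ← hM] using hL).feedback (hw a haL)
        have hout : weightOn w (R f) h ≤ weightOn w (R a) h :=
          weightOn_mono fun v hv => dominates a haL hKa v (hh v hv)
        have hin : weightOn w (fun v => R v a) h ≤ weightOn w P h :=
          weightOn_mono fun v hv hva => by
            by_contra hP
            refine hK v hv ⟨fun hfv => ?_, hP⟩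
            exact asymm a haL v (hh v hv) (dominates a haL hKa v (hh v hv) hfv) hva
        have htail := ih (p ++ h ++ [a]) [] (by simp [← hM]) (by simp)
        simp only [List.nil_append] at htail
        simp only [weightOn_append, weightOn_cons, if_neg hKa.1, if_neg hKa.2]
        omega
      · simpa using ih p (h ++ [a]) (by simp [← hM])
          (by simpa [or_imp, forall_and] using ⟨hK, hKa⟩)
  simpa using suffix_bound M [] [] (by simp) (by simp)

theorem weightOn_toList (p : V → Prop) [DecidablePred p] (s : Finset V) :
    weightOn w p s.toList = ∑ v ∈ s with p v, w v := by
  rw [weightOn, Finset.sum_map_toList, Finset.sum_filter]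
  congr!

variable (R w) in
open Classical in
theorem exists_sum_le_sum_second (s : Finset V) (hs : s.Nonempty) (hw : ∀ v ∈ s, 0 < w v)
    (asymm : ∀ u ∈ s, ∀ v ∈ s, R u v → ¬ R v u)
    (total : ∀ u ∈ s, ∀ v ∈ s, u ≠ v → ¬ R u v → R v u) :
    ∃ f ∈ s, ∑ v ∈ s with R f v, w v ≤
      ∑ v ∈ s with (¬ R f v ∧ ∃ t ∈ s, R f t ∧ R t v), w v := by
  obtain ⟨L, hperm, hL⟩ := exists_isMedianOrder R w s.toList
  have hmem : ∀ v, v ∈ L ↔ v ∈ s := by simp [hperm.mem_iff]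
  obtain rfl | ⟨M, f, rfl⟩ := L.eq_nil_or_concat
  · obtain ⟨v, hv⟩ := hs
    simp [← hmem] at hv
  rw [List.concat_eq_append] at hL hperm hmem
  simp only [← hmem] at hw asymm total
  have hf : f ∈ M ++ [f] := by simp
  have key := hL.weightOn_le_weightOn_second hw asymm total
  refine ⟨f, (hmem f).1 hf, ?_⟩
  simp only [← weightOn_toList, ← weightOn_perm _ hperm, weightOn_append, weightOn_cons,
    weightOn_nil]
  rw [if_neg (fun h => asymm f hf f hf h h), if_neg fun h => ?_]
  · simpa [hmem] using key
  · obtain ⟨t, ht, hft, htf⟩ := h.2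
    exact asymm f hf t ((hmem t).2 ht) hft htf

end MedianOrder

namespace NoDigons

variable {A : V → V → Prop}

theorem irrefl (hA : NoDigons A) (v : V) : ¬ A v v := fun h => hA v v ⟨h, h⟩

theorem not_arc (hA : NoDigons A) {u v : V} (h : A u v) : ¬ A v u := fun h' => hA u v ⟨h, h'⟩

theorem ne (hA : NoDigons A) {u v : V} (h : A u v) : u ≠ v := by
  rintro rfl
  exact hA.irrefl u h

end NoDigons


section Contraction

open Classical in
noncomputable def contractWeight (S : Set V) (x : V) (v : V) : ℕ := if v = x then S.ncard else 1

open Classical in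
noncomputable def contractVertices [Fintype V] (S : Set V) (x : V) : Finset V :=
  {v | v = x ∨ v ∉ S}.toFinset

variable {S : Set V} {x : V}

theorem mem_contractVertices [Fintype V] {v : V} :
    v ∈ contractVertices S x ↔ v = x ∨ v ∉ S := by
  simp [contractVertices]

theorem contractWeight_pos [Finite V] (hxS : x ∈ S) (v : V) : 0 < contractWeight S x v := by
  unfold contractWeight
  split_ifs
  · exact (Set.ncard_pos (Set.toFinite S)).2 ⟨x, hxS⟩
  · exact Nat.one_pos

theorem sum_contractWeight_of_notMem {T : Finset V} (hx : x ∉ T) :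
    ∑ v ∈ T, contractWeight S x v = T.card := by
  rw [Finset.card_eq_sum_ones]
  exact Finset.sum_congr rfl fun v hv => if_neg fun (h : v = x) => hx (h ▸ hv)

theorem sum_contractWeight_le_ncard [Finite V] {T : Finset V} {X : Set V}
    (hT : ∀ v ∈ T, v ≠ x → v ∈ X ∧ v ∉ S) (hx : x ∈ T → S ⊆ X) :
    ∑ v ∈ T, contractWeight S x v ≤ X.ncard := by
  classical
  by_cases hxT : x ∈ T
  · have hT' : ∀ v ∈ T.erase x, v ∈ X ∧ v ∉ S := fun v hv =>
      hT v (Finset.mem_of_mem_erase hv) (Finset.ne_of_mem_erase hv)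
    rw [← Finset.add_sum_erase T _ hxT, sum_contractWeight_of_notMem (Finset.notMem_erase x T),
      contractWeight, if_pos rfl, ← Set.ncard_coe_finset,
      ← Set.ncard_union_eq (Set.disjoint_right.2 fun v hv => (hT' v hv).2)]
    exact Set.ncard_le_ncard (Set.union_subset (hx hxT) fun v hv => (hT' v hv).1)
  · rw [sum_contractWeight_of_notMem hxT, ← Set.ncard_coe_finset]
    exact Set.ncard_le_ncard fun v hv => (hT v hv fun h => hxT (h ▸ hv)).1

theorem ncard_le_sum_contractWeight [Finite V] {T : Finset V} {X : Set V} (hxS : x ∈ S)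
    (hT : ∀ v ∈ X, v ∉ S → v ∈ T) (hx : (X ∩ S).Nonempty → x ∈ T) :
    X.ncard ≤ ∑ v ∈ T, contractWeight S x v := by
  classical
  by_cases hxT : x ∈ T
  · rw [← Finset.add_sum_erase T _ hxT, sum_contractWeight_of_notMem (Finset.notMem_erase x T),
      contractWeight, if_pos rfl, ← Set.ncard_inter_add_ncard_sdiff_eq_ncard X S,
      ← Set.ncard_coe_finset]
    refine Nat.add_le_add (Set.ncard_le_ncard Set.inter_subset_right) (Set.ncard_le_ncard ?_)
    exact fun v hv => Finset.mem_erase.2 ⟨fun h => hv.2 (h ▸ hxS), hT v hv.1 hv.2⟩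
  · rw [sum_contractWeight_of_notMem hxT, ← Set.ncard_coe_finset]
    exact Set.ncard_le_ncard fun v hv => hT v hv fun hvS => hxT (hx ⟨v, hv, hvS⟩)

variable [Fintype V] {A : V → V → Prop}

open Classical in
theorem ncard_nplus_le_sum_contractWeight (hA : NoDigons A) (hxS : x ∈ S)
    (hmod : ∀ u ∉ S, (∀ o ∈ S, A o u) ∨ ∀ o ∈ S, A u o) {f : V} (hf : f ∉ S) :
    (Nplus A f).ncard ≤ ∑ v ∈ contractVertices S x with A f v, contractWeight S x v := by
  refine ncard_le_sum_contractWeight hxS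
    (fun v hv hvS => by simpa [mem_contractVertices, hvS, Nplus] using hv) ?_
  rintro ⟨o, hfo, hoS⟩
  have hfS : ∀ o' ∈ S, A f o' := (hmod f hf).resolve_left fun h => hA.not_arc (h o hoS) hfo
  simpa [mem_contractVertices] using hfS x hxS

open Classical in
theorem sum_contractWeight_le_ncard_npp (hA : NoDigons A) (hxS : x ∈ S)
    (hmod : ∀ u ∉ S, (∀ o ∈ S, A o u) ∨ ∀ o ∈ S, A u o) {f : V} (hf : f ∉ S) :
    ∑ v ∈ contractVertices S x with
      (¬ A f v ∧ ∃ t ∈ contractVertices S x, A f t ∧ A t v), contractWeight S x v ≤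
        (Npp A f).ncard := by
  refine sum_contractWeight_le_ncard (fun v hv hvx => ?_) fun hx => ?_
  · simp only [Finset.mem_filter, mem_contractVertices] at hv
    obtain ⟨hvS | hvS, hfv, t, -, hft, htv⟩ := hv
    · exact absurd hvS hvx
    · refine ⟨⟨?_, hfv, t, hft, htv⟩, hvS⟩
      rintro rfl
      exact hA.not_arc hft htv
  · simp only [Finset.mem_filter, mem_contractVertices] at hx
    obtain ⟨-, hfx, t, htS, hft, htx⟩ := hx
    have htS : t ∉ S := htS.resolve_left (by rintro rfl; exact hfx hft)
    have hSf : ∀ o ∈ S, A o f := (hmod f hf).resolve_right fun h => hfx (h x hxS)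
    have htS' : ∀ o ∈ S, A t o :=
      (hmod t htS).resolve_left fun h => hA.not_arc htx (h x hxS)
    exact fun o ho => ⟨fun h => hf (h ▸ ho), hA.not_arc (hSf o ho), t, hft, htS' o ho⟩

/-- Contracting `S` into `x` with weight `|S|` gives a weighted tournament; its vertex with the
weighted SNP either lies outside `S`, and then has the SNP, or is `x`. -/
theorem exists_snp_or_of_module (hA : NoDigons A) (hxS : x ∈ S)
    (hmod : ∀ u ∉ S, (∀ o ∈ S, A o u) ∨ ∀ o ∈ S, A u o)
    (hadj : ∀ u ∉ S, ∀ v, v ≠ u → A u v ∨ A v u) :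
    (∃ v, SNP A v) ∨ (Nplus A x \ S).ncard ≤ (Npp A x \ S).ncard := by
  have total : ∀ u ∈ contractVertices S x, ∀ v ∈ contractVertices S x,
      u ≠ v → ¬ A u v → A v u := by
    simp only [mem_contractVertices]
    rintro u (rfl | hu) v (rfl | hv) huv hnuv
    · exact absurd rfl huv
    · exact (hadj v hv u huv).resolve_right hnuv
    · exact (hadj u hu v huv.symm).resolve_left hnuv
    · exact (hadj u hu v huv.symm).resolve_left hnuv
  obtain ⟨f, hf, hfeed⟩ := MedianOrder.exists_sum_le_sum_second A (contractWeight S x)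
    (contractVertices S x) ⟨x, mem_contractVertices.2 (Or.inl rfl)⟩
    (fun v _ => contractWeight_pos hxS v) (fun u _ v _ h => hA.not_arc h) total
  rcases mem_contractVertices.1 hf with rfl | hfS
  · refine Or.inr (le_trans ?_ (le_trans hfeed ?_))
    · refine ncard_le_sum_contractWeight hxS
        (fun v hv hvS => by simpa [mem_contractVertices, hvS, Nplus] using hv.1) ?_
      rintro ⟨v, hv, hvS⟩
      exact absurd hvS hv.2
    · refine sum_contractWeight_le_ncard (fun v hv hvf => ?_) fun hf => ?_
      · simp only [Finset.mem_filter, mem_contractVertices] at hv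
        obtain ⟨hvS | hvS, hfv, t, -, hft, htv⟩ := hv
        · exact absurd hvS hvf
        · exact ⟨⟨⟨hvf, hfv, t, hft, htv⟩, hvS⟩, hvS⟩
      · simp only [Finset.mem_filter] at hf
        obtain ⟨-, -, t, -, hft, htf⟩ := hf
        exact absurd htf (hA.not_arc hft)
  · exact Or.inl ⟨f, (ncard_nplus_le_sum_contractWeight hA hxS hmod hfS).trans
      (hfeed.trans (sum_contractWeight_le_ncard_npp hA hxS hmod hfS))⟩

end Contraction

section Configuration

variable {A : V → V → Prop}

theorem MissingEdge.symm {u v : V} (h : MissingEdge A u v) : MissingEdge A v u :=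
  ⟨h.1.symm, h.2.2, h.2.1⟩

theorem LosesAt.swap {x₁ y₁ x₂ y₂ : V} (h : LosesAt A x₁ y₁ x₂ y₂) :
    LosesAt A y₁ x₁ y₂ x₂ :=
  ⟨h.2.2.2.1, h.2.2.2.2.1, h.2.2.2.2.2, h.1, h.2.1, h.2.2.1⟩

theorem EdgeLoses.exists_losesAt_left {u v : V} {e : Sym2 V} (h : EdgeLoses A s(u, v) e) :
    ∃ p q, MissingEdge A p q ∧ LosesAt A u v p q := by
  obtain ⟨x₁, y₁, x₂, y₂, he, -, -, hm, hl⟩ := h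
  rcases Sym2.eq_iff.1 he with ⟨rfl, rfl⟩ | ⟨rfl, rfl⟩
  · exact ⟨x₂, y₂, hm, hl⟩
  · exact ⟨y₂, x₂, hm.symm, hl.swap⟩

theorem EdgeLoses.exists_losesAt_right {u v : V} {e : Sym2 V} (h : EdgeLoses A e s(u, v)) :
    ∃ p q, MissingEdge A p q ∧ LosesAt A p q u v := by
  obtain ⟨x₁, y₁, x₂, y₂, -, he, hm, -, hl⟩ := h
  rcases Sym2.eq_iff.1 he with ⟨rfl, rfl⟩ | ⟨rfl, rfl⟩
  · exact ⟨x₁, y₁, hm, hl⟩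
  · exact ⟨y₁, x₁, hm.symm, hl.swap⟩

/-- The hypotheses of the theorem, bundled so that they can be rotated `(x, y, z) ↦ (y, z, x)`. -/
structure ThreeStars (A : V → V → Prop) (x y z : V) : Prop where
  noDigons : NoDigons A
  arc_xy : A x y
  arc_yz : A y z
  arc_zx : A z x
  star : ∀ u v, MissingEdge A u v → u = x ∨ v = x ∨ u = y ∨ v = y ∨ u = z ∨ v = z
  disj_xy : ∀ v, ¬ (MissingEdge A v x ∧ MissingEdge A v y)
  disj_yz : ∀ v, ¬ (MissingEdge A v y ∧ MissingEdge A v z)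
  disj_xz : ∀ v, ¬ (MissingEdge A v x ∧ MissingEdge A v z)
  leaf_x : ∃ a, MissingEdge A x a
  leaf_y : ∃ b, MissingEdge A y b
  leaf_z : ∃ c, MissingEdge A z c
  indeg : ∀ u v, MissingEdge A u v → ∃ e, EdgeLoses A e s(u, v)
  outdeg : ∀ u v, MissingEdge A u v → ∃ e, EdgeLoses A s(u, v) e

def starSet (A : V → V → Prop) (x y z : V) : Set V :=
  {v | v = x ∨ v = y ∨ v = z ∨ MissingEdge A x v ∨ MissingEdge A y v ∨ MissingEdge A z v}

theorem starSet_rotate (A : V → V → Prop) (x y z : V) : starSet A y z x = starSet A x y z := by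
  ext v
  simp only [starSet, Set.mem_ofPred_eq]
  tauto

namespace ThreeStars

variable {x y z : V}

theorem rotate (hC : ThreeStars A x y z) : ThreeStars A y z x where
  noDigons := hC.noDigons
  arc_xy := hC.arc_yz
  arc_yz := hC.arc_zx
  arc_zx := hC.arc_xy
  star u v h := by have := hC.star u v h; tauto
  disj_xy := hC.disj_yz
  disj_yz v h := hC.disj_xz v ⟨h.2, h.1⟩
  disj_xz v h := hC.disj_xy v ⟨h.2, h.1⟩
  leaf_x := hC.leaf_y
  leaf_y := hC.leaf_z
  leaf_z := hC.leaf_x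
  indeg := hC.indeg
  outdeg := hC.outdeg

theorem z_mem_Npp_x (hC : ThreeStars A x y z) : z ∈ Npp A x :=
  ⟨hC.noDigons.ne hC.arc_zx, hC.noDigons.not_arc hC.arc_zx, y, hC.arc_xy, hC.arc_yz⟩

theorem leaf_x_ne (hC : ThreeStars A x y z) {a : V} (ha : MissingEdge A x a) :
    a ≠ y ∧ a ≠ z :=
  ⟨by rintro rfl; exact ha.2.1 hC.arc_xy, by rintro rfl; exact ha.2.2 hC.arc_zx⟩

theorem leaf_x_not_reaches_y (hC : ThreeStars A x y z) {a : V} (ha : MissingEdge A x a) :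
    ¬ A a y ∧ y ∉ Npp A a := by
  obtain ⟨e, he⟩ := hC.outdeg x a ha
  obtain ⟨p, q, hpq, hxp, hxq, hq, -, hap, hp⟩ := he.exists_losesAt_left
  rcases hC.star p q hpq with rfl | rfl | rfl | rfl | rfl | rfl
  · exact absurd hxp (hC.noDigons.irrefl p)
  · exact absurd hxp hpq.2.2
  · exact ⟨hap, hp⟩
  · exact absurd hC.arc_xy hxq
  · exact absurd hxp (hC.noDigons.not_arc hC.arc_zx)
  · exact absurd hC.z_mem_Npp_x hq

theorem x_not_reaches_leaf_y (hC : ThreeStars A x y z) {b : V} (hb : MissingEdge A y b) :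
    ¬ A x b ∧ b ∉ Npp A x := by
  obtain ⟨e, he⟩ := hC.indeg y b hb
  obtain ⟨p, q, hpq, hpy, hpb, hp, hqb, hqy, hq⟩ := he.exists_losesAt_right
  rcases hC.star p q hpq with rfl | rfl | rfl | rfl | rfl | rfl
  · exact ⟨hpb, hp⟩
  · exact absurd hC.arc_xy hqy
  · exact absurd hpy (hC.noDigons.irrefl p)
  · exact absurd hqb hb.2.1
  · exact absurd hpy (hC.noDigons.not_arc hC.arc_yz)
  · exact absurd hC.rotate.rotate.z_mem_Npp_x hq

theorem eq_x_of_missingEdge_leaf (hC : ThreeStars A x y z) {a v : V} (ha : MissingEdge A x a)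
    (hm : MissingEdge A a v) : v = x := by
  rcases hC.star a v hm with h | h | h | h | h | h
  · exact absurd h.symm ha.1
  · exact h
  · exact absurd h (hC.leaf_x_ne ha).1
  · exact (hC.disj_xy a ⟨ha.symm, h ▸ hm⟩).elim
  · exact absurd h (hC.leaf_x_ne ha).2
  · exact (hC.disj_xz a ⟨ha.symm, h ▸ hm⟩).elim

theorem arc_y_leaf (hC : ThreeStars A x y z) {a : V} (ha : MissingEdge A x a) : A y a := by
  by_contra hya
  exact hC.disj_xy a ⟨ha.symm, (hC.leaf_x_ne ha).1, (hC.leaf_x_not_reaches_y ha).1, hya⟩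

theorem arc_leaf_of_arc_z (hC : ThreeStars A x y z) {a v : V} (ha : MissingEdge A x a)
    (hvx : v ≠ x) (hzv : A z v) : A a v := by
  obtain ⟨hza, hnpp⟩ := hC.rotate.rotate.x_not_reaches_leaf_y ha
  by_contra hav
  have hva : ¬ A v a := fun hva => hnpp ⟨(hC.leaf_x_ne ha).2, hza, v, hzv, hva⟩
  have hav' : a ≠ v := by
    rintro rfl
    exact hza hzv
  exact hvx (hC.eq_x_of_missingEdge_leaf ha ⟨hav', hav, hva⟩)

theorem arc_y_of_arc_leaf (hC : ThreeStars A x y z) {a v : V} (ha : MissingEdge A x a)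
    (hv : ¬ MissingEdge A y v) (hav : A a v) : A y v := by
  obtain ⟨hay, hnpp⟩ := hC.leaf_x_not_reaches_y ha
  have hyv : y ≠ v := by
    rintro rfl
    exact hay hav
  by_contra hyv'
  exact hv ⟨hyv, hyv', fun hvy => hnpp ⟨(hC.leaf_x_ne ha).1.symm, hay, v, hav, hvy⟩⟩

theorem arc_y_of_arc_z (hC : ThreeStars A x y z) {u : V} (hu : u ∉ starSet A x y z)
    (hzu : A z u) : A y u := by
  obtain ⟨a, ha⟩ := hC.leaf_x
  simp only [starSet, Set.mem_ofPred_eq, not_or] at hu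
  exact hC.arc_y_of_arc_leaf ha hu.2.2.2.2.1 (hC.arc_leaf_of_arc_z ha hu.1 hzu)

theorem arc_center_iff (hC : ThreeStars A x y z) {u : V} (hu : u ∉ starSet A x y z) :
    (A y u ↔ A x u) ∧ (A z u ↔ A x u) := by
  have hxz : A x u → A z u := hC.rotate.arc_y_of_arc_z (by rwa [starSet_rotate])
  have hzy : A z u → A y u := hC.arc_y_of_arc_z hu
  have hyx : A y u → A x u :=
    hC.rotate.rotate.arc_y_of_arc_z (by rwa [starSet_rotate, starSet_rotate])
  exact ⟨⟨hyx, hzy ∘ hxz⟩, ⟨hyx ∘ hzy, hxz⟩⟩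

theorem arc_leaf_iff (hC : ThreeStars A x y z) {a u : V} (ha : MissingEdge A x a)
    (hu : u ∉ starSet A x y z) : A a u ↔ A x u := by
  have hu' := hu
  simp only [starSet, Set.mem_ofPred_eq, not_or] at hu'
  exact ⟨fun h => (hC.arc_center_iff hu).1.1 (hC.arc_y_of_arc_leaf ha hu'.2.2.2.2.1 h),
    fun h => hC.arc_leaf_of_arc_z ha hu'.1 ((hC.arc_center_iff hu).2.2 h)⟩

theorem arc_iff_of_mem (hC : ThreeStars A x y z) {o u : V} (hu : u ∉ starSet A x y z)
    (ho : o ∈ starSet A x y z) : A o u ↔ A x u := by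
  have hu₁ : u ∉ starSet A y z x := by rwa [starSet_rotate]
  have hu₂ : u ∉ starSet A z x y := by rwa [starSet_rotate, starSet_rotate]
  rcases ho with rfl | rfl | rfl | ho | ho | ho
  · rfl
  · exact (hC.arc_center_iff hu).1
  · exact (hC.arc_center_iff hu).2
  · exact hC.arc_leaf_iff ho hu
  · exact (hC.rotate.arc_leaf_iff ho hu₁).trans (hC.arc_center_iff hu).1
  · exact (hC.rotate.rotate.arc_leaf_iff ho hu₂).trans (hC.arc_center_iff hu).2

theorem adj_of_notMem (hC : ThreeStars A x y z) {u v : V} (hu : u ∉ starSet A x y z)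
    (hv : v ≠ u) : A u v ∨ A v u := by
  by_contra h
  rw [not_or] at h
  have hm : MissingEdge A u v := ⟨hv.symm, h.1, h.2⟩
  have hm' := hm.symm
  simp only [starSet, Set.mem_ofPred_eq] at hu
  rcases hC.star u v hm with rfl | rfl | rfl | rfl | rfl | rfl <;> tauto

theorem dominated_or_dominates (hC : ThreeStars A x y z) {u : V} (hu : u ∉ starSet A x y z) :
    (∀ o ∈ starSet A x y z, A o u) ∨ ∀ o ∈ starSet A x y z, A u o := by
  by_cases hxu : A x u
  · exact Or.inl fun o ho => (hC.arc_iff_of_mem hu ho).2 hxu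
  · refine Or.inr fun o ho => ?_
    have hou : o ≠ u := by
      rintro rfl
      exact hu ho
    exact (hC.adj_of_notMem hu hou).resolve_right fun h => hxu ((hC.arc_iff_of_mem hu ho).1 h)

theorem nplus_inter_starSet (hC : ThreeStars A x y z) :
    Nplus A x ∩ starSet A x y z = insert y {v | MissingEdge A z v} := by
  ext v
  simp only [Nplus, Set.mem_inter_iff, Set.mem_insert_iff, Set.mem_ofPred_eq]
  constructor
  · rintro ⟨hxv, rfl | rfl | rfl | hv | hv | hv⟩
    · exact absurd hxv (hC.noDigons.irrefl v)
    · exact Or.inl rfl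
    · exact absurd hxv (hC.noDigons.not_arc hC.arc_zx)
    · exact absurd hxv hv.2.1
    · exact absurd hxv (hC.x_not_reaches_leaf_y hv).1
    · exact Or.inr hv
  · rintro (rfl | hv)
    · exact ⟨hC.arc_xy, Or.inr (Or.inl rfl)⟩
    · exact ⟨hC.rotate.rotate.arc_y_leaf hv, Or.inr (Or.inr (Or.inr (Or.inr (Or.inr hv))))⟩

theorem insert_subset_npp_inter_starSet (hC : ThreeStars A x y z) :
    insert z {v | MissingEdge A x v} ⊆ Npp A x ∩ starSet A x y z := by
  rintro v (rfl | hv)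
  · exact ⟨hC.z_mem_Npp_x, Or.inr (Or.inr (Or.inl rfl))⟩
  · exact ⟨⟨hv.1.symm, hv.2.1, y, hC.arc_xy, hC.arc_y_leaf hv⟩,
      Or.inr (Or.inr (Or.inr (Or.inl hv)))⟩

theorem snp_x_of_le [Finite V] (hC : ThreeStars A x y z)
    (hL : {v | MissingEdge A z v}.ncard ≤ {v | MissingEdge A x v}.ncard)
    (h : (Nplus A x \ starSet A x y z).ncard ≤ (Npp A x \ starSet A x y z).ncard) : SNP A x := by
  have hplus := Set.ncard_inter_add_ncard_sdiff_eq_ncard (Nplus A x) (starSet A x y z)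
  have hpp := Set.ncard_inter_add_ncard_sdiff_eq_ncard (Npp A x) (starSet A x y z)
  have hsub := Set.ncard_le_ncard hC.insert_subset_npp_inter_starSet
  rw [hC.nplus_inter_starSet, Set.ncard_insert_of_notMem fun hm => hm.2.2 hC.arc_yz] at hplus
  rw [Set.ncard_insert_of_notMem fun hm => hm.2.2 hC.arc_zx] at hsub
  unfold SNP
  omega

theorem nplus_diff_rotate (hC : ThreeStars A x y z) :
    Nplus A y \ starSet A x y z = Nplus A x \ starSet A x y z := by
  ext u
  exact and_congr_left fun hu => (hC.arc_center_iff hu).1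

theorem npp_diff_rotate (hC : ThreeStars A x y z) :
    Npp A y \ starSet A x y z = Npp A x \ starSet A x y z := by
  ext u
  refine and_congr_left fun hu => ?_
  have hu' := hu
  simp only [starSet, Set.mem_ofPred_eq, not_or] at hu'
  have hiff := (hC.arc_center_iff hu).1
  -- if `x` does not dominate `u`, then `u` dominates the stars, so its in-neighbours lie outside
  have hout : ∀ w, A w u → ¬ A x u → w ∉ starSet A x y z := fun w hwu hxu hw =>
    hxu ((hC.arc_iff_of_mem hu hw).1 hwu)
  constructor
  · rintro ⟨-, hyu, w, hyw, hwu⟩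
    have hxu : ¬ A x u := mt hiff.2 hyu
    exact ⟨hu'.1, hxu, w, (hC.arc_center_iff (hout w hwu hxu)).1.1 hyw, hwu⟩
  · rintro ⟨-, hxu, w, hxw, hwu⟩
    exact ⟨hu'.2.1, mt hiff.1 hxu, w, (hC.arc_center_iff (hout w hwu hxu)).1.2 hxw, hwu⟩

/-- The leaf counts cannot strictly increase all the way around the triangle. -/
theorem exists_snp_of_le [Finite V] (hC : ThreeStars A x y z)
    (h : (Nplus A x \ starSet A x y z).ncard ≤ (Npp A x \ starSet A x y z).ncard) :
    ∃ v, SNP A v := by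
  by_cases hx : {v | MissingEdge A z v}.ncard ≤ {v | MissingEdge A x v}.ncard
  · exact ⟨x, hC.snp_x_of_le hx h⟩
  have hy : (Nplus A y \ starSet A x y z).ncard ≤ (Npp A y \ starSet A x y z).ncard := by
    rwa [hC.nplus_diff_rotate, hC.npp_diff_rotate]
  by_cases hxy : {v | MissingEdge A x v}.ncard ≤ {v | MissingEdge A y v}.ncard
  · exact ⟨y, hC.rotate.snp_x_of_le hxy (by rwa [starSet_rotate])⟩
  · refine ⟨z, hC.rotate.rotate.snp_x_of_le (by omega) ?_⟩
    rwa [starSet_rotate A y z x, hC.rotate.nplus_diff_rotate, hC.rotate.npp_diff_rotate,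
      starSet_rotate]

end ThreeStars

end Configuration

theorem tournament_minus_three_stars_SNP_general [Fintype V]
    (A : V → V → Prop) (hA : NoDigons A)
    (x y z : V)
    (hXY : A x y) (hYZ : A y z) (hZX : A z x)
    -- the missing graph is the disjoint union of three stars with centers x, y, z:
    (hStar : ∀ u v, MissingEdge A u v → u = x ∨ v = x ∨ u = y ∨ v = y ∨ u = z ∨ v = z)
    (hDisjXY : ∀ v, ¬ (MissingEdge A v x ∧ MissingEdge A v y))
    (hDisjYZ : ∀ v, ¬ (MissingEdge A v y ∧ MissingEdge A v z))
    (hDisjXZ : ∀ v, ¬ (MissingEdge A v x ∧ MissingEdge A v z))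
    (hxLeaf : ∃ a, MissingEdge A x a) (hyLeaf : ∃ b, MissingEdge A y b)
    (hzLeaf : ∃ c, MissingEdge A z c)
    -- δ(Δ) > 0:
    (hIndeg : ∀ u v, MissingEdge A u v → ∃ e : Sym2 V, EdgeLoses A e s(u, v))
    (hOutdeg : ∀ u v, MissingEdge A u v → ∃ e : Sym2 V, EdgeLoses A s(u, v) e) :
    ∃ v : V, SNP A v := by
  have hC : ThreeStars A x y z := ⟨hA, hXY, hYZ, hZX, hStar, hDisjXY, hDisjYZ, hDisjXZ,
    hxLeaf, hyLeaf, hzLeaf, hIndeg, hOutdeg⟩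
  obtain h | h := exists_snp_or_of_module hA (Or.inl rfl : x ∈ starSet A x y z)
    (fun u hu => hC.dominated_or_dominates hu) fun u hu v hv => hC.adj_of_notMem hu hv
  · exact h
  · exact hC.exists_snp_of_le h

/-- a digraph obtained from a tournament by deleting the edges of
three disjoint stars whose centers form a directed triangle `x → y → z → x`, in
which every missing edge has positive in-degree and positive out-degree in the
dependency digraph, has a vertex with the SNP. -/
theorem tournament_minus_three_stars_SNP [Fintype V]
    (A : V → V → Prop) (hA : NoDigons A)
    (x y z : V) (hxy : x ≠ y) (hyz : y ≠ z) (hxz : x ≠ z)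
    (hXY : A x y) (hYZ : A y z) (hZX : A z x)
    -- the missing graph is the disjoint union of three stars with centers x, y, z:
    (hStar : ∀ u v, MissingEdge A u v → u = x ∨ v = x ∨ u = y ∨ v = y ∨ u = z ∨ v = z)
    (hDisjXY : ∀ v, ¬ (MissingEdge A v x ∧ MissingEdge A v y))
    (hDisjYZ : ∀ v, ¬ (MissingEdge A v y ∧ MissingEdge A v z))
    (hDisjXZ : ∀ v, ¬ (MissingEdge A v x ∧ MissingEdge A v z))
    (hxLeaf : ∃ a, MissingEdge A x a) (hyLeaf : ∃ b, MissingEdge A y b)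
    (hzLeaf : ∃ c, MissingEdge A z c)
    -- δ(Δ) > 0:
    (hIndeg : ∀ u v, MissingEdge A u v → ∃ e : Sym2 V, EdgeLoses A e s(u, v))
    (hOutdeg : ∀ u v, MissingEdge A u v → ∃ e : Sym2 V, EdgeLoses A s(u, v) e) :
    ∃ v : V, SNP A v :=
  tournament_minus_three_stars_SNP_general A hA x y z hXY hYZ hZX hStar hDisjXY hDisjYZ hDisjXZ
    hxLeaf hyLeaf hzLeaf hIndeg hOutdeg
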